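/- arXiv:1501.04800 — 4 statements merged into one kernel-verified Lean document; each statement's English description precedes it below -/
import Mathlib

section
/- For real numbers b > a > 0 and α ∈ [1/2, 1], it holds that (b^(α+1/2) − a^(α+1/2))² ≥ (α+1/2)²·((b^(2α−1) + a^(2α−1))/4)·(b−a)². -/
/-! The map `x ↦ x ^ (α - 1/2)` is concave on `[a, b]`, so its integral dominates the trapezoid
`(b - a) (a ^ (α - 1/2) + b ^ (α - 1/2)) / 2` (the easy half of Hermite–Hadamard, obtained by
pairing `x` with its reflection `a + b - x`). Computing the integral gives
`b ^ (α + 1/2) - a ^ (α + 1/2) ≥ (α + 1/2) (b - a) (a ^ (α - 1/2) + b ^ (α - 1/2)) / 2`;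
squaring and dropping the cross term `2 a ^ (α - 1/2) b ^ (α - 1/2) ≥ 0` gives the claim. -/

open intervalIntegral Set

theorem ConcaveOn.add_le_add_reflect {f : ℝ → ℝ} {a b x : ℝ} (hf : ConcaveOn ℝ (Icc a b) f)
    (hx : x ∈ Icc a b) : f a + f b ≤ f x + f (a + b - x) := by
  obtain ⟨hax, hxb⟩ := hx
  rcases hax.eq_or_lt with rfl | hax'
  · simp
  have hab : 0 < b - a := by linarith
  have ha : a ∈ Icc a b := left_mem_Icc.2 (by linarith)
  have hb : b ∈ Icc a b := right_mem_Icc.2 (by linarith)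
  have ht : 0 ≤ (b - x) / (b - a) := div_nonneg (by linarith) hab.le
  have hs : 0 ≤ (x - a) / (b - a) := div_nonneg (by linarith) hab.le
  have hts : (b - x) / (b - a) + (x - a) / (b - a) = 1 := by field_simp; ring
  have h₁ := hf.2 ha hb ht hs hts
  have h₂ := hf.2 ha hb hs ht (by rw [add_comm, hts])
  have hx : (b - x) / (b - a) * a + (x - a) / (b - a) * b = x := by field_simp; ring
  have hx' : (x - a) / (b - a) * a + (b - x) / (b - a) * b = a + b - x := by field_simp; ring
  simp only [smul_eq_mul, hx, hx'] at h₁ h₂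
  calc f a + f b = ((b - x) / (b - a) + (x - a) / (b - a)) * (f a + f b) := by rw [hts, one_mul]
    _ = ((b - x) / (b - a) * f a + (x - a) / (b - a) * f b)
        + ((x - a) / (b - a) * f a + (b - x) / (b - a) * f b) := by ring
    _ ≤ f x + f (a + b - x) := add_le_add h₁ h₂

theorem ConcaveOn.trapezoid_le_integral {f : ℝ → ℝ} {a b : ℝ} (hab : a ≤ b)
    (hf : ConcaveOn ℝ (Icc a b) f) (hfi : IntervalIntegrable f MeasureTheory.volume a b) :
    (f a + f b) / 2 * (b - a) ≤ ∫ x in a..b, f x := by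
  have hfi' : IntervalIntegrable (fun x => f (a + b - x)) MeasureTheory.volume a b := by
    simpa only [add_sub_cancel_right, add_sub_cancel_left] using
      (hfi.comp_sub_left (a + b)).symm
  have hreflect : ∫ x in a..b, f (a + b - x) = ∫ x in a..b, f x := by
    rw [integral_comp_sub_left, add_sub_cancel_right, add_sub_cancel_left]
  have hsum := integral_mono_on hab intervalIntegrable_const (hfi.add hfi')
    fun x hx => hf.add_le_add_reflect hx
  rw [integral_const, integral_add hfi hfi', hreflect, smul_eq_mul] at hsum
  linarith

theorem Real.add_one_mul_trapezoid_rpow_le_rpow_sub {a b r : ℝ} (ha : 0 ≤ a) (hab : a ≤ b)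
    (hr₀ : 0 ≤ r) (hr₁ : r ≤ 1) :
    (r + 1) * ((a ^ r + b ^ r) / 2) * (b - a) ≤ b ^ (r + 1) - a ^ (r + 1) := by
  have hconc : ConcaveOn ℝ (Icc a b) (· ^ r) :=
    (concaveOn_rpow hr₀ hr₁).subset (Icc_subset_Ici_iff hab |>.2 ha) (convex_Icc a b)
  have := hconc.trapezoid_le_integral hab (intervalIntegrable_rpow (Or.inl hr₀))
  rw [integral_rpow (Or.inl (by linarith)), le_div_iff₀ (by linarith)] at this
  linarith

/-- Squared version of the concavity-based power difference bound. -/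
theorem stmt1 (a b α : ℝ) (ha : 0 < a) (hab : a < b)
    (hα1 : 1/2 ≤ α) (hα2 : α ≤ 1) :
    (b ^ (α + 1/2) - a ^ (α + 1/2))^2 ≥
      (α + 1/2)^2 * ((b ^ (2*α - 1) + a ^ (2*α - 1)) / 4) * (b - a)^2 := by
  have hb : 0 < b := ha.trans hab
  have key := Real.add_one_mul_trapezoid_rpow_le_rpow_sub ha.le hab.le
    (r := α - 1/2) (by linarith) (by linarith)
  rw [show α - 1/2 + 1 = α + 1/2 by ring] at key
  have hsq (c : ℝ) (hc : 0 < c) : c ^ (2*α - 1) = (c ^ (α - 1/2)) ^ 2 := by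
    rw [sq, ← Real.rpow_add hc]; ring_nf
  have hA := Real.rpow_nonneg ha.le (α - 1/2)
  have hB := Real.rpow_nonneg hb.le (α - 1/2)
  have hlower : 0 ≤ (α + 1/2) * ((a ^ (α - 1/2) + b ^ (α - 1/2)) / 2) * (b - a) := by
    have := sub_pos.2 hab; positivity
  rw [ge_iff_le, hsq a ha, hsq b hb]
  calc _ ≤ ((α + 1/2) * ((a ^ (α - 1/2) + b ^ (α - 1/2)) / 2) * (b - a)) ^ 2 := by
        nlinarith [mul_nonneg (mul_nonneg hA hB) (sq_nonneg ((α + 1/2) * (b - a)))]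
    _ ≤ _ := pow_le_pow_left₀ hlower key 2
end

section
/- Fix α ∈ (1/2, 1], λ ≥ 0, K ∈ ℕ, δ > 0, and set Θ_α = √(2α)/(2α+1), Λ = √(λ/(2α+1)). For a strictly increasing vector x = (x_0,…,x_K) define z_{k−1/2} = δ/(x_k − x_{k−1}) for k = 1,…,K. Define H(x) = δ∑_{k=1}^K Θ_α z_{k−1/2}^{α−1/2}/(α−1/2) + (Λ/2)δ∑_{k=0}^K x_k², F(x) = Θ_α² δ∑_{k=0}^K ((z_{k+1/2}^{α+1/2} − z_{k−1/2}^{α+1/2})/δ)² + (λ/2)δ∑_{k=0}^K x_k² (with the convention z_{−1/2} = z_{K+1/2} = 0). Then F(x) = ‖∇_δ H(x)‖_δ² + (2α−1)·Λ·H(x), where ∇_δ H(x) = δ^{−1}∂_x H(x) and ‖v‖_δ² = δ∑_k v_k². -/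
/-!
Expanding the square in `‖∇_δ H‖²_δ` gives the two diagonal terms of `F`, with `λ/2` replaced by
`Λ²`, plus the cross term `2ΘΛ ∑ x_k (z_{k+1/2}^{α+1/2} - z_{k-1/2}^{α+1/2})`. Summation by parts
(the boundary values of `z` vanish) and `(x_{k+1} - x_k) z_{k+1/2} = δ` turn the cross term into
`-2ΘΛ δ ∑ z^{α-1/2}`, which `(2α-1)Λ H` cancels because `2 = (2α-1)/(α-1/2)`; its remaining part
`(2α-1)Λ²/2 · δ ∑ x_k²` supplies the difference `λ/2 - Λ²`.
-/

open Finset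

theorem sum_range_mul_sub_eq_neg_sum_sub_mul {R : Type*} [CommRing R] (K : ℕ) (x w : ℕ → R)
    (hw0 : w 0 = 0) (hwK : w (K + 1) = 0) :
    ∑ k ∈ range (K + 1), x k * (w (k + 1) - w k)
      = -∑ k ∈ range K, (x (k + 1) - x k) * w (k + 1) := by
  simp only [mul_sub, sum_sub_distrib]
  rw [sum_range_succ, hwK, sum_range_succ' (fun k => x k * w k), hw0]
  simp only [mul_zero, add_zero, sub_mul, sum_sub_distrib]
  ring

theorem mul_rpow_add_one_of_mul_eq {d z δ : ℝ} (p : ℝ) (hz : z ≠ 0) (h : d * z = δ) :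
    d * z ^ (p + 1) = δ * z ^ p := by
  rw [Real.rpow_add_one hz, ← h]
  ring

theorem sum_range_mul_rpow_sub_eq {K : ℕ} {δ p : ℝ} (hδ : 0 < δ) (hp : p + 1 ≠ 0)
    {x z : ℕ → ℝ} (hx : ∀ k, k < K → x k < x (k + 1))
    (hz : ∀ k, 1 ≤ k → k ≤ K → z k = δ / (x k - x (k - 1)))
    (hz0 : z 0 = 0) (hzK : z (K + 1) = 0) :
    ∑ k ∈ range (K + 1), x k * (z (k + 1) ^ (p + 1) - z k ^ (p + 1))
      = -(δ * ∑ k ∈ Icc 1 K, z k ^ p) := by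
  have hcell : ∀ k ∈ range K, (x (k + 1) - x k) * z (k + 1) ^ (p + 1) = δ * z (k + 1) ^ p := by
    intro k hk
    rw [mem_range] at hk
    have hd : 0 < x (k + 1) - x k := sub_pos.2 (hx k hk)
    have hzk : z (k + 1) = δ / (x (k + 1) - x k) := by
      simpa using hz (k + 1) (by omega) (by omega)
    refine mul_rpow_add_one_of_mul_eq p (hzk ▸ div_pos hδ hd).ne' ?_
    rw [hzk]
    field_simp
  rw [sum_range_mul_sub_eq_neg_sum_sub_mul K x (fun k => z k ^ (p + 1))
      (by simp [hz0, Real.zero_rpow hp]) (by simp [hzK, Real.zero_rpow hp]),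
    sum_congr rfl hcell, ← mul_sum, ← Ico_add_one_right_eq_Icc, sum_Ico_eq_sum_range]
  simp only [add_comm 1, Nat.add_sub_cancel]

theorem mul_sum_sq_inv_mul_add {ι : Type*} (s : Finset ι) (a x : ι → ℝ) {δ : ℝ} (hδ : δ ≠ 0)
    (Θ Λ : ℝ) :
    δ * ∑ k ∈ s, (δ⁻¹ * (Θ * a k + Λ * δ * x k)) ^ 2
      = Θ ^ 2 * δ * ∑ k ∈ s, (a k / δ) ^ 2 + 2 * Θ * Λ * ∑ k ∈ s, x k * a k
        + Λ ^ 2 * δ * ∑ k ∈ s, x k ^ 2 := by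
  simp only [mul_sum, ← sum_add_distrib]
  refine sum_congr rfl fun k _ => ?_
  field_simp
  ring

theorem stmt6_general (K : ℕ) (δ α lam : ℝ) (hδ : 0 < δ)
    (hα : 1/2 < α) (hlam : 0 ≤ lam)
    (x z : ℕ → ℝ)
    (hx : ∀ k, k < K → x k < x (k+1))
    (hz : ∀ k, 1 ≤ k → k ≤ K → z k = δ / (x k - x (k-1)))
    (hz0 : z 0 = 0) (hzK : z (K+1) = 0) :
    let Θ : ℝ := Real.sqrt (2*α) / (2*α + 1)
    let Λ : ℝ := Real.sqrt (lam / (2*α + 1))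
    let H : ℝ := δ * ∑ k ∈ Finset.Icc 1 K, Θ * (z k) ^ (α - 1/2) / (α - 1/2)
        + Λ/2 * (δ * ∑ k ∈ Finset.range (K+1), (x k)^2)
    let F : ℝ := Θ^2 * δ *
        ∑ k ∈ Finset.range (K+1), (((z (k+1)) ^ (α + 1/2) - (z k) ^ (α + 1/2)) / δ)^2
        + lam/2 * (δ * ∑ k ∈ Finset.range (K+1), (x k)^2)
    let gradδH : ℕ → ℝ := fun k =>
        δ⁻¹ * (Θ * ((z (k+1)) ^ (α + 1/2) - (z k) ^ (α + 1/2)) + Λ * δ * x k)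
    F = δ * ∑ k ∈ Finset.range (K+1), (gradδH k)^2 + (2*α - 1) * Λ * H := by
  intro Θ Λ H F gradδH
  have hratio : (2 * α - 1) / (α - 1/2) = 2 := by
    rw [div_eq_iff (by linarith)]
    ring
  have hlam_eq : lam = Λ ^ 2 * (2 * α + 1) := by
    rw [Real.sq_sqrt (by positivity), div_mul_cancel₀ _ (by positivity)]
  have hcross := sum_range_mul_rpow_sub_eq (p := α - 1/2) hδ (by linarith) hx hz hz0 hzK
  rw [show α - 1/2 + 1 = α + 1/2 by ring] at hcross
  simp only [F, H, gradδH]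
  rw [mul_sum_sq_inv_mul_add _ _ _ hδ.ne', hcross, ← sum_div, ← mul_sum, hlam_eq]
  linear_combination (-(Λ * δ * Θ * ∑ k ∈ Icc 1 K, z k ^ (α - 1/2))) * hratio

/-- Discrete fundamental entropy–information relation for `α ∈ (1/2, 1]`. -/
theorem stmt6 (K : ℕ) (hK : 1 ≤ K) (δ α lam : ℝ) (hδ : 0 < δ)
    (hα : 1/2 < α) (hα1 : α ≤ 1) (hlam : 0 ≤ lam)
    (x z : ℕ → ℝ)
    (hx : ∀ k, k < K → x k < x (k+1))
    (hz : ∀ k, 1 ≤ k → k ≤ K → z k = δ / (x k - x (k-1)))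
    (hz0 : z 0 = 0) (hzK : z (K+1) = 0) :
    let Θ : ℝ := Real.sqrt (2*α) / (2*α + 1)
    let Λ : ℝ := Real.sqrt (lam / (2*α + 1))
    let H : ℝ := δ * ∑ k ∈ Finset.Icc 1 K, Θ * (z k) ^ (α - 1/2) / (α - 1/2)
        + Λ/2 * (δ * ∑ k ∈ Finset.range (K+1), (x k)^2)
    let F : ℝ := Θ^2 * δ *
        ∑ k ∈ Finset.range (K+1), (((z (k+1)) ^ (α + 1/2) - (z k) ^ (α + 1/2)) / δ)^2
        + lam/2 * (δ * ∑ k ∈ Finset.range (K+1), (x k)^2)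
    let gradδH : ℕ → ℝ := fun k =>
        δ⁻¹ * (Θ * ((z (k+1)) ^ (α + 1/2) - (z k) ^ (α + 1/2)) + Λ * δ * x k)
    F = δ * ∑ k ∈ Finset.range (K+1), (gradδH k)^2 + (2*α - 1) * Λ * H :=
  stmt6_general K δ α lam hδ hα hlam x z hx hz hz0 hzK
end

section
/- Fix λ ≥ 0, K ∈ ℕ, δ > 0 with Kδ = 1, set Λ = √(λ/2). For strictly increasing x ∈ ℝ^(K+1) with z_{k−1/2} = δ/(x_k − x_{k−1}), define H(x) = (1/2)δ∑_{k=1}^K ln(z_{k−1/2}) + (Λ/2)δ∑_k x_k² and F(x) = (1/4)δ∑_{k=0}^K ((z_{k+1/2} − z_{k−1/2})/δ)² + (λ/2)δ∑_k x_k² (with z_{−1/2} = z_{K+1/2} = 0). Then F(x) = ‖∇_δ H(x)‖_δ² + Λ. -/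
/-!
Expanding the square in `‖∇_δ H‖_δ²` produces the two terms of `F` (using `Λ² = λ/2`) plus the
cross term `Λ ∑ₖ xₖ (z_{k+1/2} - z_{k-1/2})`. Summation by parts, with the vanishing boundary
values of `z`, turns the cross sum into `-∑ₖ (xₖ - x_{k-1}) z_{k-1/2} = -Kδ = -1`.
-/

open Finset

theorem sum_range_mul_sub_eq_neg_sum_of_boundary_zero {R : Type*} [CommRing R]
    (x z : ℕ → R) (K : ℕ) (hz0 : z 0 = 0) (hzK : z (K + 1) = 0) :
    ∑ k ∈ range (K + 1), x k * (z (k + 1) - z k) =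
      -∑ k ∈ range K, (x (k + 1) - x k) * z (k + 1) := by
  rw [sum_congr rfl fun k _ => mul_sub (x k) _ _, sum_sub_distrib, sum_range_succ,
    sum_range_succ' (fun k => x k * z k), hzK, hz0]
  simp only [mul_zero, add_zero, sub_mul, sum_sub_distrib]
  ring

theorem sum_range_sub_mul_div_sub {F : Type*} [Field F] (x z : ℕ → F) (δ : F) (K : ℕ)
    (hx : ∀ k < K, x k ≠ x (k + 1)) (hz : ∀ k < K, z (k + 1) = δ / (x (k + 1) - x k)) :
    ∑ k ∈ range K, (x (k + 1) - x k) * z (k + 1) = K * δ := by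
  have hterm : ∀ k ∈ range K, (x (k + 1) - x k) * z (k + 1) = δ := fun k hk => by
    have hk := mem_range.1 hk
    rw [hz k hk, mul_div_cancel₀ _ (sub_ne_zero.2 (hx k hk).symm)]
  rw [sum_congr rfl hterm, sum_const, card_range, nsmul_eq_mul]

theorem mul_sum_sq_inv_mul_half_add {F : Type*} [Field F] [CharZero F] (δ Λ : F) (hδ : δ ≠ 0)
    (d x : ℕ → F) (s : Finset ℕ) :
    δ * ∑ k ∈ s, (δ⁻¹ * (1 / 2 * d k + Λ * δ * x k)) ^ 2 =
      1 / 4 * (δ * ∑ k ∈ s, (d k / δ) ^ 2) + Λ * ∑ k ∈ s, x k * d k +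
        Λ ^ 2 * (δ * ∑ k ∈ s, x k ^ 2) := by
  simp only [mul_sum, ← sum_add_distrib]
  refine sum_congr rfl fun k _ => ?_
  field_simp
  ring

theorem stmt7_general (K : ℕ) (δ lam : ℝ) (hδ : 0 < δ) (hlam : 0 ≤ lam)
    (hmass : (K : ℝ) * δ = 1)
    (x z : ℕ → ℝ)
    (hx : ∀ k, k < K → x k < x (k+1))
    (hz : ∀ k, 1 ≤ k → k ≤ K → z k = δ / (x k - x (k-1)))
    (hz0 : z 0 = 0) (hzK : z (K+1) = 0) :
    let Λ : ℝ := Real.sqrt (lam / 2)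
    let H : ℝ := 1/2 * (δ * ∑ k ∈ Finset.Icc 1 K, Real.log (z k))
        + Λ/2 * (δ * ∑ k ∈ Finset.range (K+1), (x k)^2)
    let F : ℝ := 1/4 * (δ * ∑ k ∈ Finset.range (K+1), ((z (k+1) - z k) / δ)^2)
        + lam/2 * (δ * ∑ k ∈ Finset.range (K+1), (x k)^2)
    let gradδH : ℕ → ℝ := fun k =>
        δ⁻¹ * (1/2 * (z (k+1) - z k) + Λ * δ * x k)
    F = δ * ∑ k ∈ Finset.range (K+1), (gradδH k)^2 + Λ := by
  intro Λ _ F _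
  have hΛ : Λ ^ 2 = lam / 2 := Real.sq_sqrt (by positivity)
  have hcross : ∑ k ∈ range (K + 1), x k * (z (k + 1) - z k) = -1 := by
    rw [sum_range_mul_sub_eq_neg_sum_of_boundary_zero x z K hz0 hzK,
      sum_range_sub_mul_div_sub x z δ K (fun k hk => (hx k hk).ne)
        (fun k hk => by simpa using hz (k + 1) (by omega) (by omega)), hmass]
  show F = δ * ∑ k ∈ range (K + 1), (δ⁻¹ * (1 / 2 * (z (k + 1) - z k) + Λ * δ * x k)) ^ 2 + Λ
  rw [mul_sum_sq_inv_mul_half_add δ Λ hδ.ne' (fun k => z (k + 1) - z k) x, hcross, hΛ]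
  ring

/-- Discrete fundamental entropy–information relation for `α = 1/2` (DLSS case). -/
theorem stmt7 (K : ℕ) (hK : 1 ≤ K) (δ lam : ℝ) (hδ : 0 < δ) (hlam : 0 ≤ lam)
    (hmass : (K : ℝ) * δ = 1)
    (x z : ℕ → ℝ)
    (hx : ∀ k, k < K → x k < x (k+1))
    (hz : ∀ k, 1 ≤ k → k ≤ K → z k = δ / (x k - x (k-1)))
    (hz0 : z 0 = 0) (hzK : z (K+1) = 0) :
    let Λ : ℝ := Real.sqrt (lam / 2)
    let H : ℝ := 1/2 * (δ * ∑ k ∈ Finset.Icc 1 K, Real.log (z k))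
        + Λ/2 * (δ * ∑ k ∈ Finset.range (K+1), (x k)^2)
    let F : ℝ := 1/4 * (δ * ∑ k ∈ Finset.range (K+1), ((z (k+1) - z k) / δ)^2)
        + lam/2 * (δ * ∑ k ∈ Finset.range (K+1), (x k)^2)
    let gradδH : ℕ → ℝ := fun k =>
        δ⁻¹ * (1/2 * (z (k+1) - z k) + Λ * δ * x k)
    F = δ * ∑ k ∈ Finset.range (K+1), (gradδH k)^2 + Λ :=
  stmt7_general K δ lam hδ hlam hmass x z hx hz hz0 hzK
end

section
/- With S⁰ = 1, Sⁿ = (1+τ_n)S^{n−1}, τ_n ∈ (0,τ], t_n = ∑_{j≤n}τ_j, α ∈ [1/2,1], and ŝ_n = ∑_{k=1}^n τ_k·S^{k−1}·(S^k)^(2α+2), it holds that ŝ_n ≤ (1+τ)^(2α+2)·(e^((2α+3)t_n) − 1)/(2α+3), and consequently e^(−t_n) ≤ (1 + a_τ·(2α+3)·ŝ_n)^(−1/(2α+3)) with a_τ = (1+τ)^(−(2α+2)). -/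
/-!
Since `1 + τ ≤ exp τ`, the recursion gives `Sᵏ ≤ exp tₖ`, so with `p = 2α + 2` each summand of `ŝₙ`
is `τₖ (1 + τₖ)^p (Sᵏ⁻¹)^(p+1) ≤ (1 + τ)^p τₖ exp ((p+1) tₖ₋₁)`. The sum of
`τₖ exp ((p+1) tₖ₋₁)` is a lower Riemann sum of the increasing function `s ↦ exp ((p+1) s)` over
`[0, tₙ]`, hence at most `(exp ((p+1) tₙ) - 1) / (p+1)`. Solving this bound for `exp tₙ` gives the
decay estimate.
-/

open Finset Real

lemma mul_mul_exp_le_exp_sub_exp (c τ t : ℝ) :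
    c * τ * exp (c * t) ≤ exp (c * (t + τ)) - exp (c * t) := by
  have h := mul_le_mul_of_nonneg_left (add_one_le_exp (c * τ)) (exp_pos (c * t)).le
  rw [mul_add, exp_add]
  linarith

lemma sum_mul_exp_partialSum_le {c : ℝ} (hc : 0 < c) (τ : ℕ → ℝ) (n : ℕ) :
    ∑ k ∈ Icc 1 n, τ k * exp (c * ∑ j ∈ Icc 1 (k - 1), τ j)
      ≤ (exp (c * ∑ j ∈ Icc 1 n, τ j) - 1) / c := by
  induction n with
  | zero => simp
  | succ k ih =>
    rw [sum_Icc_succ_top (by omega), sum_Icc_succ_top (by omega : 1 ≤ k + 1) τ,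
      Nat.add_sub_cancel, le_div_iff₀ hc, add_mul]
    rw [le_div_iff₀ hc] at ih
    linarith [mul_mul_exp_le_exp_sub_exp c (τ (k + 1)) (∑ j ∈ Icc 1 k, τ j)]

section MulRecurrence

variable {τ S : ℕ → ℝ}

lemma mul_recurrence_pos (hτ : ∀ n, 0 ≤ τ (n + 1)) (hS0 : S 0 = 1)
    (hS : ∀ n, S (n + 1) = (1 + τ (n + 1)) * S n) (n : ℕ) : 0 < S n := by
  induction n with
  | zero => simp [hS0]
  | succ k ih =>
    rw [hS]
    have := hτ k
    positivity

lemma mul_recurrence_le_exp_sum (hτ : ∀ n, 0 ≤ τ (n + 1)) (hS0 : S 0 = 1)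
    (hS : ∀ n, S (n + 1) = (1 + τ (n + 1)) * S n) (n : ℕ) :
    S n ≤ exp (∑ j ∈ Icc 1 n, τ j) := by
  induction n with
  | zero => simp [hS0]
  | succ k ih =>
    rw [hS, sum_Icc_succ_top (by omega), exp_add, mul_comm (exp _)]
    have hτk : 1 + τ (k + 1) ≤ exp (τ (k + 1)) := by linarith [add_one_le_exp (τ (k + 1))]
    have := hτ k
    have := (mul_recurrence_pos hτ hS0 hS k).le
    gcongr

lemma mul_recurrence_summand_le {T p : ℝ} (hp : 0 ≤ p)
    (hτ : ∀ n, 0 ≤ τ (n + 1)) (hτT : ∀ n, τ (n + 1) ≤ T) (hS0 : S 0 = 1)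
    (hS : ∀ n, S (n + 1) = (1 + τ (n + 1)) * S n) (k : ℕ) :
    τ (k + 1) * S k * S (k + 1) ^ p
      ≤ (1 + T) ^ p * (τ (k + 1) * exp ((p + 1) * ∑ j ∈ Icc 1 k, τ j)) := by
  have hSk := mul_recurrence_pos hτ hS0 hS k
  have hτk := hτ k
  have hSk_pow : S k ^ (p + 1) ≤ exp ((p + 1) * ∑ j ∈ Icc 1 k, τ j) := by
    rw [mul_comm, exp_mul]
    gcongr
    exact mul_recurrence_le_exp_sum hτ hS0 hS k
  have hτT_pow : (1 + τ (k + 1)) ^ p ≤ (1 + T) ^ p := by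
    gcongr
    exact hτT k
  have hT : 0 ≤ (1 + T) ^ p := by
    have := hτT k
    exact rpow_nonneg (by linarith) p
  calc τ (k + 1) * S k * S (k + 1) ^ p
      = (1 + τ (k + 1)) ^ p * (τ (k + 1) * S k ^ (p + 1)) := by
        rw [hS, mul_rpow (by linarith) hSk.le, rpow_add_one hSk.ne']
        ring
    _ ≤ (1 + T) ^ p * (τ (k + 1) * exp ((p + 1) * ∑ j ∈ Icc 1 k, τ j)) := by
        gcongr

lemma sum_mul_recurrence_le {T p : ℝ} (hp : 0 ≤ p)
    (hτ : ∀ n, 0 ≤ τ (n + 1)) (hτT : ∀ n, τ (n + 1) ≤ T) (hS0 : S 0 = 1)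
    (hS : ∀ n, S (n + 1) = (1 + τ (n + 1)) * S n) (n : ℕ) :
    ∑ k ∈ Icc 1 n, τ k * S (k - 1) * S k ^ p
      ≤ (1 + T) ^ p * (exp ((p + 1) * ∑ j ∈ Icc 1 n, τ j) - 1) / (p + 1) := by
  calc ∑ k ∈ Icc 1 n, τ k * S (k - 1) * S k ^ p
      ≤ ∑ k ∈ Icc 1 n, (1 + T) ^ p * (τ k * exp ((p + 1) * ∑ j ∈ Icc 1 (k - 1), τ j)) := by
        refine sum_le_sum fun k hk => ?_
        obtain ⟨m, rfl⟩ : ∃ m, k = m + 1 := Nat.exists_eq_add_of_le' (mem_Icc.mp hk).1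
        exact mul_recurrence_summand_le hp hτ hτT hS0 hS m
    _ ≤ (1 + T) ^ p * ((exp ((p + 1) * ∑ j ∈ Icc 1 n, τ j) - 1) / (p + 1)) := by
        rw [← mul_sum]
        have hT : 0 ≤ 1 + T := by linarith [hτ 0, hτT 0]
        gcongr
        exact sum_mul_exp_partialSum_le (by linarith) τ n
    _ = _ := mul_div_assoc _ _ _ |>.symm

end MulRecurrence

lemma exp_neg_le_rpow_of_le_exp {c t x : ℝ} (hc : 0 < c) (hx : 0 < x) (h : x ≤ exp (c * t)) :
    exp (-t) ≤ x ^ (-(1 / c)) := by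
  calc exp (-t) = exp (c * t) ^ (-(1 / c)) := by
        rw [← exp_mul]
        field_simp
    _ ≤ x ^ (-(1 / c)) := rpow_le_rpow_of_nonpos hx h (by simp [hc.le])

lemma one_add_mul_mul_le_of_le_mul_sub_div {a C c s E : ℝ} (hc : 0 < c) (ha : 0 ≤ a)
    (haC : a * C = 1) (h : s ≤ C * (E - 1) / c) : 1 + a * c * s ≤ E := by
  have hcancel : a * c * (C * (E - 1) / c) = E - 1 := by
    rw [mul_div_assoc', mul_right_comm, mul_div_cancel_right₀ _ hc.ne', ← mul_assoc, haC, one_mul]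
  linarith [mul_le_mul_of_nonneg_left h (mul_nonneg ha hc.le)]

theorem stmt13_general (τmax α : ℝ) (hτ : 0 < τmax) (hα : 1/2 ≤ α)
    (τ S : ℕ → ℝ) (hτn : ∀ n, 1 ≤ n → 0 < τ n ∧ τ n ≤ τmax)
    (hS0 : S 0 = 1) (hS : ∀ n : ℕ, S (n+1) = (1 + τ (n+1)) * S n) (n : ℕ) :
    let t : ℕ → ℝ := fun m => ∑ j ∈ Finset.Icc 1 m, τ j
    let shat : ℝ := ∑ k ∈ Finset.Icc 1 n, τ k * S (k-1) * (S k) ^ (2*α + 2)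
    let aτ : ℝ := (1 + τmax) ^ (-(2*α + 2))
    shat ≤ (1 + τmax) ^ (2*α + 2) * (Real.exp ((2*α + 3) * t n) - 1) / (2*α + 3) ∧
    Real.exp (-(t n)) ≤ (1 + aτ * (2*α + 3) * shat) ^ (-(1/(2*α + 3))) := by
  intro t shat aτ
  have hτpos : ∀ k, 0 ≤ τ (k + 1) := fun k => (hτn (k + 1) (by omega)).1.le
  have hSpos := mul_recurrence_pos hτpos hS0 hS
  have hc : (2 * α + 2) + 1 = 2 * α + 3 := by ring
  have hbound : shat ≤ (1 + τmax) ^ (2*α + 2) * (exp ((2*α + 3) * t n) - 1) / (2*α + 3) := by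
    have := sum_mul_recurrence_le (p := 2 * α + 2) (by linarith) hτpos
      (fun k => (hτn (k + 1) (by omega)).2) hS0 hS n
    rwa [hc] at this
  refine ⟨hbound, exp_neg_le_rpow_of_le_exp (by linarith) ?_ ?_⟩
  · have : 0 ≤ shat := sum_nonneg fun k hk =>
      have := (hτn k (mem_Icc.mp hk).1).1
      have := hSpos (k - 1)
      have := hSpos k
      by positivity
    positivity
  · refine one_add_mul_mul_le_of_le_mul_sub_div (by linarith) (by positivity) ?_ hbound
    rw [← rpow_add (by linarith), neg_add_cancel, rpow_zero]

/-- Bound on the rescaled times `ŝₙ` and the resulting algebraic decay bound. -/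
theorem stmt13 (τmax α : ℝ) (hτ : 0 < τmax) (hα : 1/2 ≤ α) (hα1 : α ≤ 1)
    (τ S : ℕ → ℝ) (hτn : ∀ n, 1 ≤ n → 0 < τ n ∧ τ n ≤ τmax)
    (hS0 : S 0 = 1) (hS : ∀ n : ℕ, S (n+1) = (1 + τ (n+1)) * S n) (n : ℕ) :
    let t : ℕ → ℝ := fun m => ∑ j ∈ Finset.Icc 1 m, τ j
    let shat : ℝ := ∑ k ∈ Finset.Icc 1 n, τ k * S (k-1) * (S k) ^ (2*α + 2)
    let aτ : ℝ := (1 + τmax) ^ (-(2*α + 2))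
    shat ≤ (1 + τmax) ^ (2*α + 2) * (Real.exp ((2*α + 3) * t n) - 1) / (2*α + 3) ∧
    Real.exp (-(t n)) ≤ (1 + aτ * (2*α + 3) * shat) ^ (-(1/(2*α + 3))) :=
  stmt13_general τmax α hτ hα τ S hτn hS0 hS n
end
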